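/- Let G be a connected graph of order n ≥ 2 and let H be a connected graph. If v is a vertex of H with v ∉ ∂(H) and there exists a vertex of H different from v, of degree one in H, that does not belong to any strong metric basis of H, then dim_s(G∘_v H) ≥ n(dim_s(H) + 1) − 1. -/

import Mathlib

namespace RootedStrong

variable {V : Type*}

/-- `u` is maximally distant from `v`: every neighbor `w` of `u` satisfies `d(v,w) ≤ d(u,v)`. -/
def MaxDistant (G : SimpleGraph V) (u v : V) : Prop :=
  ∀ w, G.Adj u w → G.dist v w ≤ G.dist u v

/-- `u` and `v` are mutually maximally distant. -/
def MMD (G : SimpleGraph V) (u v : V) : Prop :=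
  MaxDistant G u v ∧ MaxDistant G v u

/-- The boundary `∂(G)` of a graph. -/
def boundary (G : SimpleGraph V) : Set V := {u | ∃ v, MMD G u v}

/-- A vertex is simplicial if its neighborhood induces a complete graph. -/
def Simplicial (G : SimpleGraph V) (u : V) : Prop :=
  ∀ x ∈ G.neighborSet u, ∀ y ∈ G.neighborSet u, x ≠ y → G.Adj x y

/-- The set `σ(G)` of simplicial vertices. -/
def simplicialSet (G : SimpleGraph V) : Set V := {u | Simplicial G u}

/-- `w` strongly resolves `u` and `v`. -/
def StronglyResolves (G : SimpleGraph V) (w u v : V) : Prop :=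
  G.dist w u = G.dist w v + G.dist v u ∨ G.dist w v = G.dist w u + G.dist u v

/-- A set of vertices is a strong metric generator if every pair of distinct vertices is
strongly resolved by some of its elements. -/
def IsStrongGenerator (G : SimpleGraph V) (S : Set V) : Prop :=
  ∀ u v : V, u ≠ v → ∃ w ∈ S, StronglyResolves G w u v

/-- The strong metric dimension of a graph. -/
noncomputable def sdim (G : SimpleGraph V) [Fintype V] : ℕ :=
  sInf {n | ∃ S : Finset V, S.card = n ∧ IsStrongGenerator G (S : Set V)}

/-- A strong metric basis: a strong metric generator of minimum cardinality. -/
def IsStrongBasis (G : SimpleGraph V) [Fintype V] (S : Finset V) : Prop :=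
  IsStrongGenerator G (S : Set V) ∧ S.card = sdim G

/-- The rooted product graph `G ∘_v H`. -/
def rootedProd {α β : Type*} (G : SimpleGraph α) (H : SimpleGraph β) (v : β) :
    SimpleGraph (α × β) where
  Adj p q := (p.1 = q.1 ∧ H.Adj p.2 q.2) ∨ (p.2 = v ∧ q.2 = v ∧ G.Adj p.1 q.1)
  symm := by
    constructor
    rintro ⟨a, x⟩ ⟨b, y⟩ (⟨h1, h2⟩ | ⟨h1, h2, h3⟩)
    · exact Or.inl ⟨h1.symm, h2.symm⟩
    · exact Or.inr ⟨h2, h1, h3.symm⟩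
  loopless := by
    constructor
    rintro ⟨a, x⟩ (⟨_, h2⟩ | ⟨_, _, h3⟩)
    · exact H.loopless.irrefl _ h2
    · exact G.loopless.irrefl _ h3

/-- Two distinct vertices are true twins if they have equal closed neighborhoods. -/
def TrueTwins (G : SimpleGraph V) (x y : V) : Prop :=
  x ≠ y ∧ ∀ z, (z = x ∨ G.Adj x z) ↔ (z = y ∨ G.Adj y z)

/-- A twin-free clique: a clique containing no pair of true twins. -/
def IsTwinFreeClique (G : SimpleGraph V) (X : Set V) : Prop :=
  (∀ x ∈ X, ∀ y ∈ X, x ≠ y → G.Adj x y) ∧ ∀ x ∈ X, ∀ y ∈ X, ¬ TrueTwins G x y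

/-- The twin-free clique number `ϖ(G)`. -/
noncomputable def twinFreeCliqueNum (G : SimpleGraph V) : ℕ :=
  sSup {n | ∃ X : Set V, IsTwinFreeClique G X ∧ X.ncard = n}


/-!
A strong metric generator contains a vertex of every mutually maximally distant pair, and a set
meeting every such pair is a strong metric generator. In `G ∘_v H`, two mutually maximally distant
vertices of `H` other than `v` stay mutually maximally distant inside each copy of `H`; since
`v ∉ ∂(H)` these are all such pairs of `H`, so a strong metric generator `S` of `G ∘_v H` meets
every copy of `H` in a strong metric generator of `H`. The copies of the leaf `w` are pairwise
mutually maximally distant, so all but at most one copy contain their copy of `w` in `S`; there the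
trace of `S` is not a basis, hence has at least `dim_s(H) + 1` elements.
-/

section Metric

variable {K : SimpleGraph V}

theorem MMD.symm {u v : V} (h : MMD K u v) : MMD K v u := ⟨h.2, h.1⟩

theorem exists_adj_dist_lt (hK : K.Connected) {u z : V} (hne : u ≠ z) :
    ∃ y, K.Adj u y ∧ K.dist y z < K.dist u z := by
  obtain ⟨p, hp⟩ := hK.exists_walk_length_eq_dist u z
  cases p with
  | nil => exact absurd rfl hne
  | cons hadj q =>
    refine ⟨_, hadj, ?_⟩
    have := SimpleGraph.dist_le q
    rw [SimpleGraph.Walk.length_cons] at hp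
    omega

theorem MaxDistant.eq_of_dist_eq_add (hK : K.Connected) {u v z : V} (hmd : MaxDistant K v u)
    (h : K.dist z u = K.dist z v + K.dist v u) : z = v := by
  by_contra hzv
  obtain ⟨y, hadj, hy⟩ := exists_adj_dist_lt hK (Ne.symm hzv)
  have hyu : K.dist u y ≤ K.dist v u := hmd y hadj
  have htri : K.dist z u ≤ K.dist z y + K.dist y u := hK.dist_triangle
  have : K.dist z y = K.dist y z := SimpleGraph.dist_comm
  have : K.dist y u = K.dist u y := SimpleGraph.dist_comm
  have : K.dist z v = K.dist v z := SimpleGraph.dist_comm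
  omega

theorem MMD.eq_or_eq_of_stronglyResolves (hK : K.Connected) {u v z : V} (h : MMD K u v)
    (hz : StronglyResolves K z u v) : z = u ∨ z = v :=
  hz.elim (fun h' => .inr (h.2.eq_of_dist_eq_add hK h'))
    (fun h' => .inl (h.1.eq_of_dist_eq_add hK h'))

theorem IsStrongGenerator.mem_or_mem_of_mmd (hK : K.Connected) {S : Set V}
    (hS : IsStrongGenerator K S) {u v : V} (huv : u ≠ v) (h : MMD K u v) : u ∈ S ∨ v ∈ S := by
  obtain ⟨z, hzS, hz⟩ := hS u v huv
  rcases h.eq_or_eq_of_stronglyResolves hK hz with rfl | rfl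
  · exact .inl hzS
  · exact .inr hzS

theorem maxDistant_of_neighborSet_subsingleton (hK : K.Connected) {u z : V}
    (hu : (K.neighborSet u).Subsingleton) (hz : z ≠ u) : MaxDistant K u z := by
  intro t ht
  obtain ⟨y, hy, hyz⟩ := exists_adj_dist_lt hK hz.symm
  rw [hu ht hy, SimpleGraph.dist_comm]
  exact hyz.le

theorem mmd_of_neighborSet_subsingleton (hK : K.Connected) {u v : V}
    (hu : (K.neighborSet u).Subsingleton) (hv : (K.neighborSet v).Subsingleton) (huv : u ≠ v) :
    MMD K u v :=
  ⟨maxDistant_of_neighborSet_subsingleton hK hu huv.symm,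
    maxDistant_of_neighborSet_subsingleton hK hv huv⟩

theorem MaxDistant.of_dist_eq_add (hK : K.Connected) {x y y' : V} (hmd : MaxDistant K x y)
    (h : K.dist y' x = K.dist y' y + K.dist y x) : MaxDistant K x y' := by
  intro t ht
  have hyt : K.dist y t ≤ K.dist x y := hmd t ht
  have htri : K.dist y' t ≤ K.dist y' y + K.dist y t := hK.dist_triangle
  have : K.dist x y = K.dist y x := SimpleGraph.dist_comm
  have : K.dist x y' = K.dist y' x := SimpleGraph.dist_comm
  omega

/-- Take `x'` as far from `y` as possible subject to `x` lying on a `y`–`x'` geodesic; a neighbour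
of `x'` farther from `y` would be a farther such vertex. -/
theorem exists_maxDistant_beyond [Fintype V] (hK : K.Connected) (x y : V) :
    ∃ x', K.dist y x' = K.dist y x + K.dist x x' ∧ MaxDistant K x' y := by
  classical
  obtain ⟨x', hx', hmax⟩ := Finset.exists_max_image
    (Finset.univ.filter fun t => K.dist y t = K.dist y x + K.dist x t)
    (fun t => K.dist y t) ⟨x, by simp⟩
  rw [Finset.mem_filter] at hx'
  refine ⟨x', hx'.2, fun t ht => ?_⟩
  by_contra! hfar
  have h1 : K.dist y t ≤ K.dist y x' + K.dist x' t := hK.dist_triangle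
  have h2 : K.dist x' t = 1 := SimpleGraph.dist_eq_one_iff_adj.mpr ht
  have h3 : K.dist y t ≤ K.dist y x + K.dist x t := hK.dist_triangle
  have h4 : K.dist x t ≤ K.dist x x' + K.dist x' t := hK.dist_triangle
  have : K.dist x' y = K.dist y x' := SimpleGraph.dist_comm
  have ht' : K.dist y t = K.dist y x + K.dist x t := by omega
  have := hmax t (by simp [ht'])
  omega

/-- Extending the pair `x, y` to `x', y'` with `x', x, y, y'` in this order on a geodesic makes
`x', y'` mutually maximally distant, and either of them strongly resolves `x, y`. -/
theorem isStrongGenerator_of_forall_mmd [Fintype V] (hK : K.Connected) {S : Set V}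
    (hS : ∀ x y, x ≠ y → MMD K x y → x ∈ S ∨ y ∈ S) : IsStrongGenerator K S := by
  intro x y hxy
  obtain ⟨x', hx'y, hx'md⟩ := exists_maxDistant_beyond hK x y
  obtain ⟨y', hy'x', hy'md⟩ := exists_maxDistant_beyond hK y x'
  have : K.dist y' x' = K.dist x' y' := SimpleGraph.dist_comm
  have : K.dist y' y = K.dist y y' := SimpleGraph.dist_comm
  have : K.dist y x' = K.dist x' y := SimpleGraph.dist_comm
  have : K.dist x' x = K.dist x x' := SimpleGraph.dist_comm
  have : K.dist x y = K.dist y x := SimpleGraph.dist_comm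
  have : K.dist x y' = K.dist y' x := SimpleGraph.dist_comm
  have hpos : 0 < K.dist y x := hK.pos_dist_of_ne hxy.symm
  have hne : x' ≠ y' := by
    rintro rfl
    have : K.dist x' x' = 0 := SimpleGraph.dist_self
    omega
  rcases hS x' y' hne ⟨hx'md.of_dist_eq_add hK (by omega), hy'md⟩ with hmem | hmem
  · exact ⟨x', hmem, .inr (by omega)⟩
  · have : K.dist x' y' ≤ K.dist x' x + K.dist x y' := hK.dist_triangle
    have : K.dist y' x ≤ K.dist y' y + K.dist y x := hK.dist_triangle
    exact ⟨y', hmem, .inl (by omega)⟩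

theorem isStrongGenerator_univ : IsStrongGenerator K Set.univ :=
  fun u _ _ => ⟨u, trivial, .inr (by rw [SimpleGraph.dist_self, zero_add])⟩

theorem sdim_le_card [Fintype V] {S : Finset V} (hS : IsStrongGenerator K S) :
    sdim K ≤ S.card :=
  Nat.sInf_le ⟨S, rfl, hS⟩

theorem le_sdim [Fintype V] {m : ℕ} (h : ∀ S : Finset V, IsStrongGenerator K S → m ≤ S.card) :
    m ≤ sdim K :=
  le_csInf ⟨_, Finset.univ, rfl, by simpa using isStrongGenerator_univ⟩
    fun _ ⟨S, hS, hgen⟩ => hS ▸ h S hgen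

end Metric

theorem card_mul_succ_sub_one_le_sum {ι : Type*} [Fintype ι] (f : ι → ℕ) {d : ℕ} {P : ι → Prop}
    (hP : ∀ a b, a ≠ b → P a ∨ P b) (hf : ∀ a, d ≤ f a) (hfP : ∀ a, P a → d < f a) :
    Fintype.card ι * (d + 1) - 1 ≤ ∑ a, f a := by
  classical
  have hfail : (Finset.univ.filter fun a => ¬ P a).card ≤ 1 :=
    Finset.card_le_one.mpr fun a ha b hb => by_contra fun hab => by
      simp only [Finset.mem_filter] at ha hb
      exact (hP a b hab).elim ha.2 hb.2
  have hpt : ∀ a ∈ Finset.univ, d + 1 ≤ f a + if ¬ P a then 1 else 0 := by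
    intro a _
    by_cases ha : P a
    · simpa [ha] using hfP a ha
    · simpa [ha] using hf a
  have hsum := Finset.sum_le_sum hpt
  simp only [Finset.sum_add_distrib, Finset.sum_boole, Finset.sum_const, Finset.card_univ,
    smul_eq_mul, Nat.cast_id] at hsum
  rw [Nat.mul_add_one]
  omega

section RootedProduct

variable {α β : Type*} {G : SimpleGraph α} {H : SimpleGraph β} {v : β}

variable (G H v) in
def copyHom (a : α) : H →g rootedProd G H v where
  toFun y := (a, y)
  map_rel' h := .inl ⟨rfl, h⟩

variable (G H v) in
def rootHom : G →g rootedProd G H v where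
  toFun u := (u, v)
  map_rel' h := .inr ⟨rfl, rfl, h⟩

theorem rootedProd_connected (hG : G.Connected) (hH : H.Connected) :
    (rootedProd G H v).Connected := by
  have := hG.nonempty
  have := hH.nonempty
  refine ⟨fun ⟨a, x⟩ ⟨b, y⟩ => ?_⟩
  exact (((hH x v).map (copyHom G H v a)).trans ((hG a b).map (rootHom G H v))).trans
    ((hH v y).map (copyHom G H v b))

/-- Projecting to `H` collapses the edges between copies, so it does not increase distances. -/
theorem dist_snd_le_length (hH : H.Connected) {p q : α × β} (w : (rootedProd G H v).Walk p q) :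
    H.dist p.2 q.2 ≤ w.length := by
  induction w with
  | nil => simp
  | @cons s t r h w ih =>
    rw [SimpleGraph.Walk.length_cons]
    rcases h with ⟨-, h⟩ | ⟨hs, ht, -⟩
    · have : H.dist s.2 t.2 = 1 := SimpleGraph.dist_eq_one_iff_adj.mpr h
      have : H.dist s.2 r.2 ≤ H.dist s.2 t.2 + H.dist t.2 r.2 := hH.dist_triangle
      omega
    · rw [ht] at ih
      rw [hs]
      omega

theorem rootedProd_dist_copy (hG : G.Connected) (hH : H.Connected) (a : α) (x y : β) :
    (rootedProd G H v).dist (a, x) (a, y) = H.dist x y := by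
  apply le_antisymm
  · obtain ⟨p, hp⟩ := hH.exists_walk_length_eq_dist x y
    exact (SimpleGraph.dist_le (p.map (copyHom G H v a))).trans_eq (by rw [SimpleGraph.Walk.length_map, hp])
  · obtain ⟨q, hq⟩ := (rootedProd_connected hG hH).exists_walk_length_eq_dist (a, x) (a, y)
    simpa [hq] using dist_snd_le_length hH q

theorem maxDistant_rootedProd_copy (hG : G.Connected) (hH : H.Connected) {x y : β}
    (h : MaxDistant H x y) (hx : x ≠ v) (a : α) : MaxDistant (rootedProd G H v) (a, x) (a, y) := by
  rintro ⟨b, t⟩ (⟨hb, ht⟩ | ⟨hxv, -⟩)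
  · obtain rfl : a = b := hb
    rw [rootedProd_dist_copy hG hH, rootedProd_dist_copy hG hH]
    exact h t ht
  · exact absurd hxv hx

theorem mmd_rootedProd_copy (hG : G.Connected) (hH : H.Connected) {x y : β} (h : MMD H x y)
    (hx : x ≠ v) (hy : y ≠ v) (a : α) : MMD (rootedProd G H v) (a, x) (a, y) :=
  ⟨maxDistant_rootedProd_copy hG hH h.1 hx a, maxDistant_rootedProd_copy hG hH h.2 hy a⟩

theorem neighborSet_rootedProd_subsingleton {w : β} (hwv : w ≠ v)
    (hw : (H.neighborSet w).Subsingleton) (a : α) :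
    ((rootedProd G H v).neighborSet (a, w)).Subsingleton := by
  rintro ⟨b, x⟩ (⟨hb, hx⟩ | ⟨hv, -⟩) ⟨c, y⟩ (⟨hc, hy⟩ | ⟨hv, -⟩)
  · obtain rfl : a = b := hb
    obtain rfl : a = c := hc
    exact congrArg (Prod.mk a) (hw hx hy)
  all_goals exact absurd hv hwv

noncomputable def fiber (S : Finset (α × β)) (a : α) : Finset β :=
  S.preimage (Prod.mk a) (Prod.mk_right_injective a).injOn

theorem sum_card_fiber [Fintype α] (S : Finset (α × β)) : ∑ a, (fiber S a).card = S.card := by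
  classical
  rw [Finset.card_eq_sum_card_fiberwise (f := Prod.fst) (t := .univ) fun _ _ => Finset.mem_univ _]
  refine Finset.sum_congr rfl fun a _ => ?_
  rw [fiber, Finset.card_preimage]
  congr 1
  ext ⟨b, y⟩
  simp [eq_comm]

theorem IsStrongGenerator.fiber_rootedProd [Fintype β] (hG : G.Connected) (hH : H.Connected)
    (hv : v ∉ boundary H) {S : Finset (α × β)}
    (hS : IsStrongGenerator (rootedProd G H v) S) (a : α) :
    IsStrongGenerator H (fiber S a) := by
  refine isStrongGenerator_of_forall_mmd hH fun x y hxy h => ?_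
  have hx : x ≠ v := by rintro rfl; exact hv ⟨y, h⟩
  have hy : y ≠ v := by rintro rfl; exact hv ⟨x, h.symm⟩
  simpa [fiber] using hS.mem_or_mem_of_mmd (rootedProd_connected hG hH)
    (by simpa using hxy) (mmd_rootedProd_copy hG hH h hx hy a)

end RootedProduct

theorem statement18_general {α β : Type*} [Fintype α] [Fintype β]
    (G : SimpleGraph α) (H : SimpleGraph β)
    (hG : G.Connected) (hH : H.Connected)
    {n : ℕ} (hn : Fintype.card α = n)
    (v : β) (hv : v ∉ boundary H)
    (hw : ∃ w : β, w ≠ v ∧ (H.neighborSet w).ncard = 1 ∧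
      ∀ S : Finset β, IsStrongBasis H S → w ∉ S) :
    n * (sdim H + 1) - 1 ≤ sdim (rootedProd G H v) := by
  obtain ⟨w, hwv, hwdeg, hwbasis⟩ := hw
  obtain ⟨w', hw'⟩ := Set.ncard_eq_one.mp hwdeg
  have hleaf (a : α) : ((rootedProd G H v).neighborSet (a, w)).Subsingleton :=
    neighborSet_rootedProd_subsingleton hwv (hw' ▸ Set.subsingleton_singleton) a
  refine le_sdim fun S hS => ?_
  have hfib (a : α) := hS.fiber_rootedProd hG hH hv a
  subst hn
  calc Fintype.card α * (sdim H + 1) - 1 ≤ ∑ a, (fiber S a).card := by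
        refine card_mul_succ_sub_one_le_sum _ (P := fun a => w ∈ fiber S a) (fun a b hab => ?_)
          (fun a => sdim_le_card (hfib a))
          (fun a ha => (sdim_le_card (hfib a)).lt_of_ne fun h => hwbasis _ ⟨hfib a, h.symm⟩ ha)
        simpa [fiber] using hS.mem_or_mem_of_mmd (rootedProd_connected hG hH)
          (by simpa using hab) (mmd_of_neighborSet_subsingleton (rootedProd_connected hG hH)
            (hleaf a) (hleaf b) (by simpa using hab))
    _ = S.card := sum_card_fiber S

theorem statement18 {α β : Type*} [Fintype α] [Fintype β]
    (G : SimpleGraph α) (H : SimpleGraph β)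
    (hG : G.Connected) (hH : H.Connected)
    {n : ℕ} (hn : Fintype.card α = n) (h2 : 2 ≤ n)
    (v : β) (hv : v ∉ boundary H)
    (hw : ∃ w : β, w ≠ v ∧ (H.neighborSet w).ncard = 1 ∧
      ∀ S : Finset β, IsStrongBasis H S → w ∉ S) :
    n * (sdim H + 1) - 1 ≤ sdim (rootedProd G H v) :=
  statement18_general G H hG hH hn v hv hw

end RootedStrong
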